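/- Let T be a full binary tree with n ≥ 2 leaves carrying positive weights p_i and positive areas a_i, and suppose local ratio correctness holds at every internal node (left-subtree area total : right-subtree area total = left weight total : right weight total). Then for any two leaves i, j, a_i·p_j = a_j·p_i. Proof may proceed by structural induction on T using the ratio-merging lemma. -/
import Mathlib


/-- A full binary tree whose leaves carry natural-number labels. -/
inductive FullBTree where
  | leaf : ℕ → FullBTree
  | node : FullBTree → FullBTree → FullBTree

namespace FullBTree

/-- The list of leaf labels of a tree. -/
def leaves : FullBTree → List ℕ
  | leaf i => [i]
  | node L R => L.leaves ++ R.leaves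

/-- Sum of a function over the leaves of a tree. -/
def leafSum (f : ℕ → ℝ) : FullBTree → ℝ
  | leaf i => f i
  | node L R => leafSum f L + leafSum f R

/-- At every internal node, the left/right subtree area totals are in the same
ratio as the corresponding weight totals. -/
def LocalRatioOK (a p : ℕ → ℝ) : FullBTree → Prop
  | leaf _ => True
  | node L R =>
      (leafSum a L) * (leafSum p R) = (leafSum a R) * (leafSum p L) ∧
      LocalRatioOK a p L ∧ LocalRatioOK a p R

end FullBTree

lemma leafSum_pos (T : FullBTree) (f : ℕ → ℝ) (hf : ∀ i ∈ T.leaves, 0 < f i) :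
    0 < T.leafSum f := by
  induction T with
  | leaf i => exact hf i (by simp [FullBTree.leaves])
  | node L R ihL ihR =>
      have hL := ihL (fun i hi => hf i (by simp [FullBTree.leaves, hi]))
      have hR := ihR (fun i hi => hf i (by simp [FullBTree.leaves, hi]))
      simpa [FullBTree.leafSum] using add_pos hL hR

lemma cross_aux (T : FullBTree) (a p : ℕ → ℝ)
    (ha : ∀ i ∈ T.leaves, 0 < a i) (hp : ∀ i ∈ T.leaves, 0 < p i)
    (hlocal : FullBTree.LocalRatioOK a p T) :
    ∀ i ∈ T.leaves, a i * T.leafSum p = p i * T.leafSum a := by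
  induction T with
  | leaf k =>
      intro i hi
      simp [FullBTree.leaves] at hi
      subst hi
      simp [FullBTree.leafSum, mul_comm]
  | node L R ihL ihR =>
      obtain ⟨hroot, hL, hR⟩ := hlocal
      have haL : ∀ i ∈ L.leaves, 0 < a i := fun i hi => ha i (by simp [FullBTree.leaves, hi])
      have haR : ∀ i ∈ R.leaves, 0 < a i := fun i hi => ha i (by simp [FullBTree.leaves, hi])
      have hpL : ∀ i ∈ L.leaves, 0 < p i := fun i hi => hp i (by simp [FullBTree.leaves, hi])
      have hpR : ∀ i ∈ R.leaves, 0 < p i := fun i hi => hp i (by simp [FullBTree.leaves, hi])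
      have hPL : 0 < L.leafSum p := leafSum_pos L p hpL
      have hPR : 0 < R.leafSum p := leafSum_pos R p hpR
      intro i hi
      simp only [FullBTree.leaves, List.mem_append] at hi
      simp only [FullBTree.leafSum]
      rcases hi with hi | hi
      · have h1 := ihL haL hpL hL i hi
        -- need a i * PR = p i * AR
        have h2 : a i * R.leafSum p * L.leafSum p = p i * R.leafSum a * L.leafSum p := by
          calc a i * R.leafSum p * L.leafSum p
              = (a i * L.leafSum p) * R.leafSum p := by ring
            _ = (p i * L.leafSum a) * R.leafSum p := by rw [h1]
            _ = p i * (L.leafSum a * R.leafSum p) := by ring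
            _ = p i * (R.leafSum a * L.leafSum p) := by rw [hroot]
            _ = p i * R.leafSum a * L.leafSum p := by ring
        have h3 := mul_right_cancel₀ (ne_of_gt hPL) h2
        nlinarith [h1, h3]
      · have h1 := ihR haR hpR hR i hi
        have h2 : a i * L.leafSum p * R.leafSum p = p i * L.leafSum a * R.leafSum p := by
          calc a i * L.leafSum p * R.leafSum p
              = (a i * R.leafSum p) * L.leafSum p := by ring
            _ = (p i * R.leafSum a) * L.leafSum p := by rw [h1]
            _ = p i * (R.leafSum a * L.leafSum p) := by ring
            _ = p i * (L.leafSum a * R.leafSum p) := by rw [← hroot]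
            _ = p i * L.leafSum a * R.leafSum p := by ring
        have h3 := mul_right_cancel₀ (ne_of_gt hPR) h2
        nlinarith [h1, h3]

theorem bottom_up_cross_mult (T : FullBTree) (a p : ℕ → ℝ)
    (hn : 2 ≤ T.leaves.length)
    (ha : ∀ i ∈ T.leaves, 0 < a i) (hp : ∀ i ∈ T.leaves, 0 < p i)
    (hlocal : FullBTree.LocalRatioOK a p T) :
    ∀ i ∈ T.leaves, ∀ j ∈ T.leaves, a i * p j = a j * p i := by
  have key := cross_aux T a p ha hp hlocal
  have hSp : 0 < T.leafSum p := leafSum_pos T p hp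
  intro i hi j hj
  have h1 := key i hi
  have h2 := key j hj
  have : a i * p j * T.leafSum p = a j * p i * T.leafSum p := by
    calc a i * p j * T.leafSum p = p j * (a i * T.leafSum p) := by ring
      _ = p j * (p i * T.leafSum a) := by rw [h1]
      _ = p i * (p j * T.leafSum a) := by ring
      _ = p i * (a j * T.leafSum p) := by rw [← h2]
      _ = a j * p i * T.leafSum p := by ring
  exact mul_right_cancel₀ (ne_of_gt hSp) this
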